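/- Let f be entire and non-constant, φ(z) = cz + b with c ≠ 1 and f ∘ φ = f. Then c is a root of unity. -/

import Mathlib

/-!
Differentiating `f (c z + b) = f z` `n` times at the fixed point `z₀ = b / (1 - c)` gives
`f⁽ⁿ⁾ z₀ = cⁿ f⁽ⁿ⁾ z₀`. By the Taylor expansion at `z₀`, a non-constant entire function has
`f⁽ⁿ⁾ z₀ ≠ 0` for some `n ≥ 1`, and then `cⁿ = 1`.
-/

section AffineInvariance

variable {𝕜 F : Type*} [NontriviallyNormedField 𝕜] [NormedAddCommGroup F] [NormedSpace 𝕜 F]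

theorem iteratedDeriv_comp_const_mul_add_const {n : ℕ} {f : 𝕜 → F} (hf : ContDiff 𝕜 n f)
    (c b : 𝕜) :
    iteratedDeriv n (fun x => f (c * x + b)) = fun x => c ^ n • iteratedDeriv n f (c * x + b) := by
  have hshift : ContDiff 𝕜 n (fun x => f (x + b)) := hf.comp (contDiff_id.add contDiff_const)
  rw [iteratedDeriv_comp_const_smul hshift c, iteratedDeriv_comp_add_const]

theorem iteratedDeriv_eq_pow_smul_of_comp_affine_eq {n : ℕ} {f : 𝕜 → F} (hf : ContDiff 𝕜 n f)
    {c b x₀ : 𝕜} (hinv : ∀ x, f (c * x + b) = f x) (hfix : c * x₀ + b = x₀) :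
    iteratedDeriv n f x₀ = c ^ n • iteratedDeriv n f x₀ := by
  have h := congrFun (iteratedDeriv_comp_const_mul_add_const hf c b) x₀
  rwa [funext hinv, hfix] at h

end AffineInvariance

theorem Differentiable.apply_eq_of_iteratedDeriv_eq_zero {f : ℂ → ℂ} (hf : Differentiable ℂ f)
    {z₀ : ℂ} (h : ∀ n, 1 ≤ n → iteratedDeriv n f z₀ = 0) (w : ℂ) : f w = f z₀ := by
  rw [← Complex.taylorSeries_eq_of_entire' z₀ w hf, tsum_eq_single 0]
  · simp
  · intro n hn
    rw [h n (Nat.one_le_iff_ne_zero.mpr hn), mul_zero, zero_mul]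

theorem stmt10_general (f : ℂ → ℂ) (hf : Differentiable ℂ f)
    (hnc : ¬ ∃ C : ℂ, ∀ w, f w = C)
    (c b : ℂ) (hc : c ≠ 1)
    (haut : ∀ z : ℂ, f (c * z + b) = f z) :
    ∃ n : ℕ, 1 ≤ n ∧ c ^ n = 1 := by
  have hfix : c * (b / (1 - c)) + b = b / (1 - c) := by
    field_simp [sub_ne_zero.mpr hc.symm]
    ring
  obtain ⟨n, hn, hderiv⟩ : ∃ n, 1 ≤ n ∧ iteratedDeriv n f (b / (1 - c)) ≠ 0 := by
    by_contra! h
    exact hnc ⟨_, hf.apply_eq_of_iteratedDeriv_eq_zero h⟩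
  refine ⟨n, hn, ?_⟩
  have h := iteratedDeriv_eq_pow_smul_of_comp_affine_eq (n := n) hf.contDiff haut hfix
  rw [smul_eq_mul, eq_comm, ← sub_eq_zero, ← sub_one_mul, mul_eq_zero] at h
  exact sub_eq_zero.mp (h.resolve_right hderiv)

/-- If `φ z = c z + b` with `c ≠ 0`, `c ≠ 1` is automorphic for a non-constant
entire `f`, then `c` is a root of unity. -/
theorem stmt10 (f : ℂ → ℂ) (hf : Differentiable ℂ f)
    (hnc : ¬ ∃ C : ℂ, ∀ w, f w = C)
    (c b : ℂ) (hc0 : c ≠ 0) (hc : c ≠ 1)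
    (haut : ∀ z : ℂ, f (c * z + b) = f z) :
    ∃ n : ℕ, 1 ≤ n ∧ c ^ n = 1 :=
  stmt10_general f hf hnc c b hc haut
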